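/- arXiv:1406.3441 — 2 statements merged into one kernel-verified Lean document; each statement's English description precedes it below -/
import Mathlib

section
/- Let ε > 0 and let N be a sufficiently large integer. Then Σ Λ(n₁) Λ(n₂) e^{−2(n₁² + n₂²)/N} Λ(n₃) Λ(n₄) ≪_ε N^{3/4 + ε}, where the sum runs over quadruples of integers n₁, n₂, n₃, n₄ ≥ 2 with n₁² + n₂² = n₃² + n₄² and n₁ a proper prime power (n₁ = p^j with p prime and j ≥ 2). -/
open scoped Classical

/-- The summand `Λ(n₁) Λ(n₂) e^{-2(n₁²+n₂²)/N} Λ(n₃) Λ(n₄)` over quadruples of integers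
`n₁, n₂, n₃, n₄ ≥ 2` with `n₁² + n₂² = n₃² + n₄²` and `n₁` a proper prime power, and `0`
otherwise. -/
noncomputable def properPowerTerm (N : ℕ) (q : ℕ × ℕ × ℕ × ℕ) : ℝ :=
  if 2 ≤ q.1 ∧ 2 ≤ q.2.1 ∧ 2 ≤ q.2.2.1 ∧ 2 ≤ q.2.2.2 ∧
      q.1 ^ 2 + q.2.1 ^ 2 = q.2.2.1 ^ 2 + q.2.2.2 ^ 2 ∧
      (∃ p j : ℕ, p.Prime ∧ 2 ≤ j ∧ q.1 = p ^ j) then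
    ArithmeticFunction.vonMangoldt q.1 * ArithmeticFunction.vonMangoldt q.2.1 *
      Real.exp (-2 * ((q.1 : ℝ) ^ 2 + (q.2.1 : ℝ) ^ 2) / N) *
      ArithmeticFunction.vonMangoldt q.2.2.1 * ArithmeticFunction.vonMangoldt q.2.2.2
  else 0
/-!
On a solution of `n₁² + n₂² = n₃² + n₄²` the weight `e^{-2(n₁² + n₂²)/N}` is the product of the
four factors `e^{-nᵢ²/N}`, and `Λ(n) ≤ n^δ / δ`, so `Λ(n) e^{-n²/N} ≤ δ⁻¹ N^σ n^{δ - 2σ}` for every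
`σ ∈ [0, 1]`; with `σ = δ / 2`, two of the four damped factors cost at most `δ⁻² N^δ`. On the
diagonal `n₁ = n₄` (hence `n₂ = n₃`) the quadruple is determined by `(n₁, n₂)`; off it, `(n₁, n₄)`
determines `(n₂, n₃)` up to the `≪_δ (n₁ n₄)^{2δ}` divisors of `n₁² - n₄² = (n₃ - n₂)(n₃ + n₂)`.
Either way one is left with a pair `(n₁, n)`, which costs `N^{1/4 + 2δ} · N^{1/2 + 2δ}` times the
convergent sum of `n₁^{-1/2-δ} n^{-1-δ}` over proper prime powers `n₁`: these are as sparse as the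
squares.
-/

open Real Finset
open scoped ArithmeticFunction.vonMangoldt

lemma rpow_le_exp {x σ : ℝ} (hx : 0 ≤ x) (hσ0 : 0 ≤ σ) (hσ1 : σ ≤ 1) : x ^ σ ≤ exp x := by
  rcases le_or_gt x 1 with h | h
  · exact (rpow_le_one hx h hσ0).trans (one_le_exp hx)
  · calc x ^ σ ≤ x ^ (1 : ℝ) := rpow_le_rpow_of_exponent_le h.le hσ1
      _ = x := rpow_one x
      _ ≤ exp x := by linarith [add_one_le_exp x]

lemma exp_neg_le_rpow_neg {x σ : ℝ} (hx : 0 < x) (hσ0 : 0 ≤ σ) (hσ1 : σ ≤ 1) :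
    exp (-x) ≤ x ^ (-σ) := by
  rw [rpow_neg hx.le, exp_neg]
  exact inv_anti₀ (rpow_pos_of_pos hx σ) (rpow_le_exp hx.le hσ0 hσ1)

lemma exp_neg_sq_div_le {x N σ : ℝ} (hx : 0 < x) (hN : 0 < N) (hσ0 : 0 ≤ σ) (hσ1 : σ ≤ 1) :
    exp (-(x ^ 2 / N)) ≤ N ^ σ * x ^ (-(2 * σ)) :=
  calc exp (-(x ^ 2 / N)) ≤ (x ^ 2 / N) ^ (-σ) := exp_neg_le_rpow_neg (by positivity) hσ0 hσ1
    _ = N ^ σ * x ^ (-(2 * σ)) := by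
      rw [div_rpow (by positivity) hN.le, rpow_neg hN.le, div_inv_eq_mul, mul_comm,
        ← rpow_natCast_mul hx.le]
      norm_num

lemma add_one_le_mul_rpow_pow {δ p : ℝ} (hδ : 0 < δ) (hp : 2 ≤ p) (k : ℕ) :
    (k + 1 : ℝ) ≤ (1 + (δ * log 2)⁻¹) * (p ^ δ) ^ k := by
  set c := δ * log 2
  have hc : 0 < c := mul_pos hδ (log_pos one_lt_two)
  have hE : exp (c * k) ≤ (p ^ δ) ^ k :=
    calc exp (c * k) = ((2 : ℝ) ^ δ) ^ k := by
          rw [rpow_def_of_pos two_pos, ← exp_nat_mul, mul_comm (log 2), mul_comm c]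
      _ ≤ (p ^ δ) ^ k := by gcongr
  have hk : (k : ℝ) ≤ c⁻¹ * exp (c * k) := by
    rw [inv_mul_eq_div, le_div_iff₀ hc]
    linarith [add_one_le_exp (c * k)]
  calc (k + 1 : ℝ) ≤ (1 + c⁻¹) * exp (c * k) := by
        linarith [one_le_exp (show 0 ≤ c * k by positivity)]
    _ ≤ (1 + c⁻¹) * (p ^ δ) ^ k := by gcongr

lemma exists_card_divisors_le_rpow {δ : ℝ} (hδ : 0 < δ) :
    ∃ C > 0, ∀ n : ℕ, n ≠ 0 → (#n.divisors : ℝ) ≤ C * (n : ℝ) ^ δ := by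
  set C₁ := 1 + (δ * log 2)⁻¹
  have hC₁ : 1 ≤ C₁ :=
    le_add_of_nonneg_right (inv_nonneg.2 (mul_pos hδ (log_pos one_lt_two)).le)
  set B := ⌈(2 : ℝ) ^ δ⁻¹⌉₊
  -- Only the primes below `2 ^ (1 / δ)` contribute a factor larger than `1`.
  have hfactor (p : ℕ) (hp : p.Prime) (k : ℕ) :
      (k + 1 : ℝ) ≤ (if p < B then C₁ else 1) * ((p : ℝ) ^ δ) ^ k := by
    split_ifs with hpB
    · exact add_one_le_mul_rpow_pow hδ (by exact_mod_cast hp.two_le) k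
    have h2 : 2 ≤ (p : ℝ) ^ δ :=
      calc (2 : ℝ) = ((2 : ℝ) ^ δ⁻¹) ^ δ := (rpow_inv_rpow two_pos.le hδ.ne').symm
        _ ≤ (p : ℝ) ^ δ := rpow_le_rpow (by positivity) (Nat.ceil_le.1 (not_lt.1 hpB)) hδ.le
    calc (k + 1 : ℝ) ≤ 2 ^ k := by exact_mod_cast Nat.lt_two_pow_self
      _ ≤ 1 * ((p : ℝ) ^ δ) ^ k := by rw [one_mul]; exact pow_le_pow_left₀ zero_le_two h2 k
  refine ⟨C₁ ^ B, by positivity, fun n hn => ?_⟩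
  have hpow : (n : ℝ) ^ δ = ∏ p ∈ n.primeFactors, ((p : ℝ) ^ δ) ^ n.factorization p := by
    have hn' : (n : ℝ) = ∏ p ∈ n.primeFactors, (p : ℝ) ^ n.factorization p := by
      exact_mod_cast Nat.prod_primeFactors_pow_factorization hn
    rw [hn', ← finsetProd_rpow _ _ fun _ _ => by positivity]
    exact prod_congr rfl fun p _ => (rpow_pow_comm (Nat.cast_nonneg p) δ _).symm
  have hconst : ∏ p ∈ n.primeFactors, (if p < B then C₁ else 1) ≤ C₁ ^ B := by
    rw [← prod_filter, prod_const]
    refine pow_le_pow_right₀ hC₁ ((card_le_card fun p hp => ?_).trans (card_range B).le)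
    exact mem_range.2 (mem_filter.1 hp).2
  calc (#n.divisors : ℝ) = ∏ p ∈ n.primeFactors, ((n.factorization p : ℝ) + 1) := by
        rw [Nat.card_divisors hn]; push_cast; rfl
    _ ≤ ∏ p ∈ n.primeFactors,
          ((if p < B then C₁ else 1) * ((p : ℝ) ^ δ) ^ n.factorization p) :=
        prod_le_prod (fun _ _ => by positivity)
          fun p hp => hfactor p (Nat.prime_of_mem_primeFactors hp) _
    _ = (∏ p ∈ n.primeFactors, (if p < B then C₁ else 1)) * (n : ℝ) ^ δ := by
        rw [prod_mul_distrib, hpow]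
    _ ≤ C₁ ^ B * (n : ℝ) ^ δ := by gcongr

def IsProperPrimePower (n : ℕ) : Prop := ∃ p j : ℕ, p.Prime ∧ 2 ≤ j ∧ n = p ^ j

lemma summable_indicator_properPrimePower_rpow {τ : ℝ} (hτ : 1 / 2 < τ) :
    Summable ({n | IsProperPrimePower n}.indicator fun n : ℕ => (n : ℝ) ^ (-τ)) := by
  set e : {p : ℕ // p.Prime} × ℕ → ℕ := fun x => (x.1 : ℕ) ^ (x.2 + 2)
  have he : e.Injective := by
    rintro ⟨⟨p, hp⟩, k⟩ ⟨⟨q, hq⟩, l⟩ h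
    obtain ⟨rfl, hkl⟩ := Nat.Prime.pow_inj hp hq h
    obtain rfl : k = l := Nat.add_right_cancel hkl
    rfl
  refine (he.summable_iff fun n hn => Set.indicator_of_notMem ?_ _).1 ?_
  · rintro ⟨p, j, hp, hj, rfl⟩
    exact hn ⟨(⟨p, hp⟩, j - 2), by simp [e, Nat.sub_add_cancel hj]⟩
  have hprimes : Summable fun p : {p : ℕ // p.Prime} => ((p : ℕ) : ℝ) ^ (-τ * (2 : ℕ)) :=
    (Real.summable_nat_rpow.2 (by push_cast; linarith)).subtype _
  have hgeom : Summable fun k : ℕ => ((2 : ℝ) ^ (-τ)) ^ k :=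
    summable_geometric_of_lt_one (by positivity)
      (rpow_lt_one_of_one_lt_of_neg one_lt_two (by linarith))
  have hnonneg (n : ℕ) : 0 ≤ {n | IsProperPrimePower n}.indicator (fun n : ℕ => (n : ℝ) ^ (-τ)) n :=
    Set.indicator_nonneg (fun _ _ => by positivity) n
  refine (hprimes.mul_of_nonneg hgeom (fun _ => by positivity) fun _ => by positivity)
    |>.of_nonneg_of_le (fun x => hnonneg (e x)) ?_
  rintro ⟨⟨p, hp⟩, k⟩
  have hp2 : (2 : ℝ) ≤ p := by exact_mod_cast hp.two_le
  rw [Function.comp_apply, Set.indicator_of_mem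
    (show e (⟨p, hp⟩, k) ∈ {n | IsProperPrimePower n} from ⟨p, k + 2, hp, by omega, rfl⟩)]
  simp only [e, Nat.cast_pow]
  rw [← rpow_pow_comm (by positivity), pow_add, mul_comm, rpow_mul_natCast (by positivity)]
  exact mul_le_mul_of_nonneg_left (pow_le_pow_left₀ (by positivity)
    (rpow_le_rpow_of_nonpos two_pos hp2 (by linarith)) k) (by positivity)

noncomputable def pairWeight (δ : ℝ) (x : ℕ × ℕ) : ℝ :=
  {n | IsProperPrimePower n}.indicator (fun n : ℕ => (n : ℝ) ^ (-(1 / 2 + δ))) x.1 *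
    (x.2 : ℝ) ^ (-(1 + δ))

lemma pairWeight_nonneg (δ : ℝ) (x : ℕ × ℕ) : 0 ≤ pairWeight δ x :=
  mul_nonneg (Set.indicator_nonneg (fun _ _ => by positivity) _) (by positivity)

lemma summable_pairWeight {δ : ℝ} (hδ : 0 < δ) : Summable (pairWeight δ) :=
  (summable_indicator_properPrimePower_rpow (by linarith)).mul_of_nonneg
    (Real.summable_nat_rpow.2 (by linarith)) (Set.indicator_nonneg fun _ _ => by positivity)
    fun _ => by positivity

lemma sum_pairWeight_le_tsum {δ : ℝ} (hδ : 0 < δ) (I : Finset (ℕ × ℕ)) :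
    ∑ x ∈ I, pairWeight δ x ≤ ∑' x, pairWeight δ x :=
  (summable_pairWeight hδ).sum_le_tsum I fun x _ => pairWeight_nonneg δ x

lemma tsum_pairWeight_pos {δ : ℝ} (hδ : 0 < δ) : 0 < ∑' x, pairWeight δ x := by
  refine (summable_pairWeight hδ).tsum_pos (pairWeight_nonneg δ) (4, 1) ?_
  rw [pairWeight, Set.indicator_of_mem
    (show 4 ∈ {n | IsProperPrimePower n} from ⟨2, 2, Nat.prime_two, le_rfl, rfl⟩)]
  positivity

noncomputable def dampedVonMangoldt (N : ℝ) (n : ℕ) : ℝ := Λ n * exp (-((n : ℝ) ^ 2 / N))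

lemma dampedVonMangoldt_nonneg (N : ℝ) (n : ℕ) : 0 ≤ dampedVonMangoldt N n :=
  mul_nonneg ArithmeticFunction.vonMangoldt_nonneg (exp_nonneg _)

lemma rpow_mul_dampedVonMangoldt_le {δ N σ : ℝ} (hδ : 0 < δ) (hN : 0 < N) (hσ0 : 0 ≤ σ)
    (hσ1 : σ ≤ 1) (β : ℝ) (n : ℕ) :
    (n : ℝ) ^ β * dampedVonMangoldt N n ≤ δ⁻¹ * N ^ σ * (n : ℝ) ^ (β + δ - 2 * σ) := by
  rcases n.eq_zero_or_pos with rfl | hn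
  · simp only [dampedVonMangoldt, ArithmeticFunction.map_zero, zero_mul, mul_zero]
    positivity
  have hn' : (0 : ℝ) < n := Nat.cast_pos.2 hn
  have hΛ : Λ n ≤ δ⁻¹ * (n : ℝ) ^ δ := by
    rw [inv_mul_eq_div]
    exact ArithmeticFunction.vonMangoldt_le_log.trans (log_natCast_le_rpow_div n hδ)
  calc (n : ℝ) ^ β * dampedVonMangoldt N n
      ≤ (n : ℝ) ^ β * ((δ⁻¹ * (n : ℝ) ^ δ) * (N ^ σ * (n : ℝ) ^ (-(2 * σ)))) :=
        mul_le_mul_of_nonneg_left (mul_le_mul hΛ (exp_neg_sq_div_le hn' hN hσ0 hσ1)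
          (exp_nonneg _) (by positivity)) (by positivity)
    _ = δ⁻¹ * N ^ σ * (n : ℝ) ^ (β + δ - 2 * σ) := by
        rw [sub_eq_add_neg, rpow_add hn', rpow_add hn']; ring

lemma dampedVonMangoldt_mul_le {δ N : ℝ} (hδ : 0 < δ) (hδ2 : δ ≤ 2) (hN : 0 < N) (m n : ℕ) :
    dampedVonMangoldt N m * dampedVonMangoldt N n ≤ δ⁻¹ ^ 2 * N ^ δ := by
  have h (k : ℕ) : dampedVonMangoldt N k ≤ δ⁻¹ * N ^ (δ / 2) := by
    have := rpow_mul_dampedVonMangoldt_le (σ := δ / 2) hδ hN (by positivity) (by linarith) 0 k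
    simpa [show δ - 2 * (δ / 2) = 0 by ring] using this
  calc dampedVonMangoldt N m * dampedVonMangoldt N n
      ≤ (δ⁻¹ * N ^ (δ / 2)) * (δ⁻¹ * N ^ (δ / 2)) :=
        mul_le_mul (h m) (h n) (dampedVonMangoldt_nonneg N n) (by positivity)
    _ = δ⁻¹ ^ 2 * N ^ δ := by rw [mul_mul_mul_comm, ← rpow_add hN, add_halves, sq]

lemma rpow_mul_dampedVonMangoldt_mul_le_pairWeight {δ N : ℝ} (hδ : 0 < δ) (hδ4 : δ ≤ 1 / 4)
    (hN : 0 < N) {a : ℕ} (ha : IsProperPrimePower a) (n : ℕ) :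
    (a : ℝ) ^ (2 * δ) * dampedVonMangoldt N a * ((n : ℝ) ^ (2 * δ) * dampedVonMangoldt N n) ≤
      δ⁻¹ ^ 2 * N ^ (3 / 4 + 4 * δ) * pairWeight δ (a, n) := by
  have ha' := rpow_mul_dampedVonMangoldt_le (σ := 1 / 4 + 2 * δ) hδ hN (by positivity)
    (by linarith) (2 * δ) a
  have hn' := rpow_mul_dampedVonMangoldt_le (σ := 1 / 2 + 2 * δ) hδ hN (by positivity)
    (by linarith) (2 * δ) n
  rw [show 2 * δ + δ - 2 * (1 / 4 + 2 * δ) = -(1 / 2 + δ) by ring] at ha'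
  rw [show 2 * δ + δ - 2 * (1 / 2 + 2 * δ) = -(1 + δ) by ring] at hn'
  calc _ ≤ δ⁻¹ * N ^ (1 / 4 + 2 * δ) * (a : ℝ) ^ (-(1 / 2 + δ)) *
        (δ⁻¹ * N ^ (1 / 2 + 2 * δ) * (n : ℝ) ^ (-(1 + δ))) :=
        mul_le_mul ha' hn' (mul_nonneg (by positivity) (dampedVonMangoldt_nonneg N n))
          (by positivity)
    _ = δ⁻¹ ^ 2 * (N ^ (1 / 4 + 2 * δ) * N ^ (1 / 2 + 2 * δ)) *
        ((a : ℝ) ^ (-(1 / 2 + δ)) * (n : ℝ) ^ (-(1 + δ))) := by ring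
    _ = δ⁻¹ ^ 2 * N ^ (3 / 4 + 4 * δ) * pairWeight δ (a, n) := by
        rw [← rpow_add hN, show 1 / 4 + 2 * δ + (1 / 2 + 2 * δ) = 3 / 4 + 4 * δ by ring,
          pairWeight, Set.indicator_of_mem (show a ∈ {n | IsProperPrimePower n} from ha)]

def IsProperPowerQuadruple (q : ℕ × ℕ × ℕ × ℕ) : Prop :=
  2 ≤ q.1 ∧ 2 ≤ q.2.1 ∧ 2 ≤ q.2.2.1 ∧ 2 ≤ q.2.2.2 ∧
    q.1 ^ 2 + q.2.1 ^ 2 = q.2.2.1 ^ 2 + q.2.2.2 ^ 2 ∧ IsProperPrimePower q.1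

noncomputable def quadrupleWeight (N : ℝ) (q : ℕ × ℕ × ℕ × ℕ) : ℝ :=
  dampedVonMangoldt N q.1 * dampedVonMangoldt N q.2.1 * dampedVonMangoldt N q.2.2.1 *
    dampedVonMangoldt N q.2.2.2

lemma quadrupleWeight_nonneg (N : ℝ) (q : ℕ × ℕ × ℕ × ℕ) : 0 ≤ quadrupleWeight N q := by
  have h := dampedVonMangoldt_nonneg N
  exact mul_nonneg (mul_nonneg (mul_nonneg (h _) (h _)) (h _)) (h _)

lemma properPowerTerm_eq (N : ℕ) (q : ℕ × ℕ × ℕ × ℕ) :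
    properPowerTerm N q = if IsProperPowerQuadruple q then quadrupleWeight N q else 0 := by
  unfold properPowerTerm IsProperPowerQuadruple IsProperPrimePower
  split_ifs with h
  · have hsq : (q.1 : ℝ) ^ 2 + q.2.1 ^ 2 = q.2.2.1 ^ 2 + q.2.2.2 ^ 2 := by
      exact_mod_cast h.2.2.2.2.1
    -- On a solution, `2 (n₁² + n₂²) = n₁² + n₂² + n₃² + n₄²`.
    have hexp : exp (-2 * ((q.1 : ℝ) ^ 2 + q.2.1 ^ 2) / N) =
        exp (-((q.1 : ℝ) ^ 2 / N)) * exp (-((q.2.1 : ℝ) ^ 2 / N)) *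
          exp (-((q.2.2.1 : ℝ) ^ 2 / N)) * exp (-((q.2.2.2 : ℝ) ^ 2 / N)) := by
      rw [← exp_add, ← exp_add, ← exp_add]
      congr 1
      calc -2 * ((q.1 : ℝ) ^ 2 + q.2.1 ^ 2) / N
          = -((q.1 : ℝ) ^ 2 + q.2.1 ^ 2 + (q.2.2.1 ^ 2 + q.2.2.2 ^ 2)) / N := by
            rw [← hsq]; ring
        _ = _ := by ring
    rw [hexp, quadrupleWeight]
    simp only [dampedVonMangoldt]
    ring
  · rfl

lemma properPowerTerm_nonneg (N : ℕ) (q : ℕ × ℕ × ℕ × ℕ) : 0 ≤ properPowerTerm N q := by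
  rw [properPowerTerm_eq]
  split_ifs
  exacts [quadrupleWeight_nonneg N q, le_rfl]

lemma card_le_card_divisors_of_sq_add_sq_eq {a d : ℕ} (had : a ≠ d)
    (S : Finset (ℕ × ℕ × ℕ × ℕ))
    (hS : ∀ q ∈ S, q.1 = a ∧ q.2.2.2 = d ∧ q.1 ^ 2 + q.2.1 ^ 2 = q.2.2.1 ^ 2 + q.2.2.2 ^ 2) :
    #S ≤ #((a : ℤ) ^ 2 - d ^ 2).natAbs.divisors := by
  have hD : (a : ℤ) ^ 2 - d ^ 2 ≠ 0 := by
    rw [sub_ne_zero]; exact_mod_cast (Nat.pow_left_injective two_ne_zero).ne had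
  -- `n₂ + n₃` divides `n₃² - n₂² = a² - d²` and, the product being fixed, determines `(n₂, n₃)`.
  have hfactor : ∀ q ∈ S,
      ((q.2.2.1 : ℤ) - q.2.1) * (q.2.1 + q.2.2.1) = (a : ℤ) ^ 2 - d ^ 2 := by
    intro q hq
    obtain ⟨rfl, rfl, h⟩ := hS q hq
    have h' : (q.1 : ℤ) ^ 2 + q.2.1 ^ 2 = q.2.2.1 ^ 2 + q.2.2.2 ^ 2 := by exact_mod_cast h
    linear_combination -h'
  refine card_le_card_of_injOn (fun q => q.2.1 + q.2.2.1) (fun q hq => ?_) fun q hq q' hq' h => ?_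
  · rw [mem_coe, Nat.mem_divisors, ← Int.natCast_dvd]
    exact ⟨Dvd.intro_left _ (by push_cast; exact hfactor q hq), Int.natAbs_ne_zero.2 hD⟩
  have h' : (q.2.1 : ℤ) + q.2.2.1 = q'.2.1 + q'.2.2.1 := by exact_mod_cast h
  have hne : (q.2.1 : ℤ) + q.2.2.1 ≠ 0 := fun h0 => hD (by rw [← hfactor q hq, h0, mul_zero])
  have hsub : (q.2.2.1 : ℤ) - q.2.1 = q'.2.2.1 - q'.2.1 :=
    mul_right_cancel₀ hne (by rw [hfactor q hq, h', hfactor q' hq'])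
  obtain ⟨ha, hd, -⟩ := hS q hq
  obtain ⟨ha', hd', -⟩ := hS q' hq'
  ext <;> omega

lemma natAbs_sq_sub_sq_le {a d : ℕ} (ha : 1 ≤ a) (hd : 1 ≤ d) :
    ((a : ℤ) ^ 2 - d ^ 2).natAbs ≤ a ^ 2 * d ^ 2 := by
  have ha2 : 1 ≤ a ^ 2 := Nat.one_le_pow _ _ ha
  have hd2 : 1 ≤ d ^ 2 := Nat.one_le_pow _ _ hd
  zify at ha2 hd2 ⊢
  rw [abs_le]
  constructor <;> nlinarith

lemma card_le_mul_rpow_of_sq_add_sq_eq {δ C : ℝ} (hδ : 0 ≤ δ) (hC0 : 0 ≤ C)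
    (hC : ∀ n : ℕ, n ≠ 0 → (#n.divisors : ℝ) ≤ C * (n : ℝ) ^ δ) {a d : ℕ} (ha : 1 ≤ a)
    (hd : 1 ≤ d) (had : a ≠ d) (S : Finset (ℕ × ℕ × ℕ × ℕ))
    (hS : ∀ q ∈ S, q.1 = a ∧ q.2.2.2 = d ∧ q.1 ^ 2 + q.2.1 ^ 2 = q.2.2.1 ^ 2 + q.2.2.2 ^ 2) :
    (#S : ℝ) ≤ C * ((a : ℝ) ^ (2 * δ) * (d : ℝ) ^ (2 * δ)) := by
  have hD : ((a : ℤ) ^ 2 - d ^ 2).natAbs ≠ 0 := by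
    rw [Int.natAbs_ne_zero, sub_ne_zero]
    exact_mod_cast (Nat.pow_left_injective two_ne_zero).ne had
  have hle : (((a : ℤ) ^ 2 - d ^ 2).natAbs : ℝ) ≤ (a : ℝ) ^ 2 * (d : ℝ) ^ 2 := by
    exact_mod_cast natAbs_sq_sub_sq_le ha hd
  calc (#S : ℝ) ≤ #((a : ℤ) ^ 2 - d ^ 2).natAbs.divisors := by
        exact_mod_cast card_le_card_divisors_of_sq_add_sq_eq had S hS
    _ ≤ C * (((a : ℤ) ^ 2 - d ^ 2).natAbs : ℝ) ^ δ := hC _ hD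
    _ ≤ C * ((a : ℝ) ^ 2 * (d : ℝ) ^ 2) ^ δ := by gcongr
    _ = C * ((a : ℝ) ^ (2 * δ) * (d : ℝ) ^ (2 * δ)) := by
        rw [mul_rpow (by positivity) (by positivity), ← rpow_natCast_mul (Nat.cast_nonneg a),
          ← rpow_natCast_mul (Nat.cast_nonneg d)]
        norm_num

lemma sum_quadrupleWeight_le_of_diagonal {δ N : ℝ} (hδ : 0 < δ) (hδ4 : δ ≤ 1 / 4)
    (hN : 0 < N) (S : Finset (ℕ × ℕ × ℕ × ℕ))
    (hS : ∀ q ∈ S, IsProperPowerQuadruple q ∧ q.1 = q.2.2.2) :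
    ∑ q ∈ S, quadrupleWeight N q ≤ δ⁻¹ ^ 4 * N ^ (3 / 4 + 5 * δ) * ∑' x, pairWeight δ x := by
  set K := δ⁻¹ ^ 4 * N ^ (3 / 4 + 5 * δ)
  have hK : K = δ⁻¹ ^ 4 * (N ^ (3 / 4 + 4 * δ) * N ^ δ) := by
    simp only [K]; rw [← rpow_add hN]; ring_nf
  have hg := dampedVonMangoldt_nonneg N
  have hg' (n : ℕ) : 0 ≤ (n : ℝ) ^ (2 * δ) * dampedVonMangoldt N n :=
    mul_nonneg (by positivity) (hg n)
  have hsymm : ∀ q ∈ S, q.2.2.1 = q.2.1 := by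
    intro q hq
    obtain ⟨⟨-, -, -, -, hsq, -⟩, had⟩ := hS q hq
    rw [had] at hsq
    exact Nat.pow_left_injective two_ne_zero (show q.2.2.1 ^ 2 = q.2.1 ^ 2 by omega)
  have hinj : Set.InjOn (fun q : ℕ × ℕ × ℕ × ℕ => (q.1, q.2.1)) S := by
    intro q hq q' hq' h
    simp only [Prod.mk.injEq] at h
    have := hsymm q hq; have := hsymm q' hq'; have := (hS q hq).2; have := (hS q' hq').2
    ext <;> omega
  have hterm : ∀ q ∈ S, quadrupleWeight N q ≤ K * pairWeight δ (q.1, q.2.1) := by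
    intro q hq
    obtain ⟨⟨ha, hb, -, -, -, hpp⟩, -⟩ := hS q hq
    have hge (n : ℕ) (hn : 2 ≤ n) :
        dampedVonMangoldt N n ≤ (n : ℝ) ^ (2 * δ) * dampedVonMangoldt N n :=
      le_mul_of_one_le_left (hg n)
        (one_le_rpow (by exact_mod_cast (by omega : 1 ≤ n)) (by positivity))
    calc quadrupleWeight N q
        = dampedVonMangoldt N q.1 * dampedVonMangoldt N q.2.1 *
            (dampedVonMangoldt N q.2.2.1 * dampedVonMangoldt N q.2.2.2) := by
          rw [quadrupleWeight]; ring
      _ ≤ (q.1 : ℝ) ^ (2 * δ) * dampedVonMangoldt N q.1 *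
            ((q.2.1 : ℝ) ^ (2 * δ) * dampedVonMangoldt N q.2.1) * (δ⁻¹ ^ 2 * N ^ δ) :=
          mul_le_mul (mul_le_mul (hge _ ha) (hge _ hb) (hg _) (hg' _))
            (dampedVonMangoldt_mul_le hδ (by linarith) hN _ _) (mul_nonneg (hg _) (hg _))
            (mul_nonneg (hg' _) (hg' _))
      _ ≤ δ⁻¹ ^ 2 * N ^ (3 / 4 + 4 * δ) * pairWeight δ (q.1, q.2.1) * (δ⁻¹ ^ 2 * N ^ δ) :=
          mul_le_mul_of_nonneg_right
            (rpow_mul_dampedVonMangoldt_mul_le_pairWeight hδ hδ4 hN hpp _) (by positivity)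
      _ = K * pairWeight δ (q.1, q.2.1) := by
          rw [hK]; ring
  calc ∑ q ∈ S, quadrupleWeight N q ≤ ∑ q ∈ S, K * pairWeight δ (q.1, q.2.1) := sum_le_sum hterm
    _ = K * ∑ x ∈ S.image fun q => (q.1, q.2.1), pairWeight δ x := by
        rw [sum_image hinj, mul_sum]
    _ ≤ K * ∑' x, pairWeight δ x := by gcongr; exact sum_pairWeight_le_tsum hδ _

lemma sum_quadrupleWeight_le_of_offDiagonal {δ N C : ℝ} (hδ : 0 < δ) (hδ4 : δ ≤ 1 / 4)
    (hN : 0 < N) (hC0 : 0 ≤ C) (hC : ∀ n : ℕ, n ≠ 0 → (#n.divisors : ℝ) ≤ C * (n : ℝ) ^ δ)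
    (S : Finset (ℕ × ℕ × ℕ × ℕ)) (hS : ∀ q ∈ S, IsProperPowerQuadruple q ∧ q.1 ≠ q.2.2.2) :
    ∑ q ∈ S, quadrupleWeight N q ≤
      C * (δ⁻¹ ^ 4 * N ^ (3 / 4 + 5 * δ)) * ∑' x, pairWeight δ x := by
  set K := C * (δ⁻¹ ^ 4 * N ^ (3 / 4 + 5 * δ))
  have hK : K = C * δ⁻¹ ^ 4 * (N ^ (3 / 4 + 4 * δ) * N ^ δ) := by
    simp only [K]; rw [← rpow_add hN]; ring_nf
  have hg := dampedVonMangoldt_nonneg N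
  set φ := fun q : ℕ × ℕ × ℕ × ℕ => (q.1, q.2.2.2)
  rw [← sum_fiberwise_of_maps_to fun q hq => mem_image_of_mem φ hq]
  calc ∑ y ∈ S.image φ, ∑ q ∈ S with φ q = y, quadrupleWeight N q
      ≤ ∑ y ∈ S.image φ, K * pairWeight δ y := sum_le_sum fun y hy => ?_
    _ = K * ∑ y ∈ S.image φ, pairWeight δ y := (mul_sum ..).symm
    _ ≤ K * ∑' x, pairWeight δ x := by gcongr; exact sum_pairWeight_le_tsum hδ _
  obtain ⟨q₀, hq₀, rfl⟩ := mem_image.1 hy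
  obtain ⟨⟨ha, -, -, hd, -, hpp⟩, had⟩ := hS q₀ hq₀
  set fiber := {q ∈ S | φ q = φ q₀}
  have hfiber : ∀ q ∈ fiber, q.1 = q₀.1 ∧ q.2.2.2 = q₀.2.2.2 ∧
      q.1 ^ 2 + q.2.1 ^ 2 = q.2.2.1 ^ 2 + q.2.2.2 ^ 2 := by
    intro q hq
    obtain ⟨hq, hqy⟩ := mem_filter.1 hq
    simp only [φ, Prod.mk.injEq] at hqy
    exact ⟨hqy.1, hqy.2, (hS q hq).1.2.2.2.2.1⟩
  have hcard := card_le_mul_rpow_of_sq_add_sq_eq hδ.le hC0 hC (by omega) (by omega) had _ hfiber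
  have hterm : ∀ q ∈ fiber, quadrupleWeight N q ≤
      dampedVonMangoldt N q₀.1 * dampedVonMangoldt N q₀.2.2.2 * (δ⁻¹ ^ 2 * N ^ δ) := by
    intro q hq
    obtain ⟨ha', hd', -⟩ := hfiber q hq
    calc quadrupleWeight N q = dampedVonMangoldt N q.1 * dampedVonMangoldt N q.2.2.2 *
          (dampedVonMangoldt N q.2.1 * dampedVonMangoldt N q.2.2.1) := by
          rw [quadrupleWeight]; ring
      _ ≤ _ := by
          rw [ha', hd']
          exact mul_le_mul_of_nonneg_left (dampedVonMangoldt_mul_le hδ (by linarith) hN _ _)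
            (mul_nonneg (hg _) (hg _))
  calc ∑ q ∈ fiber, quadrupleWeight N q
      ≤ #fiber *
          (dampedVonMangoldt N q₀.1 * dampedVonMangoldt N q₀.2.2.2 * (δ⁻¹ ^ 2 * N ^ δ)) := by
        rw [← nsmul_eq_mul, ← sum_const]; exact sum_le_sum hterm
    _ ≤ C * ((q₀.1 : ℝ) ^ (2 * δ) * (q₀.2.2.2 : ℝ) ^ (2 * δ)) *
          (dampedVonMangoldt N q₀.1 * dampedVonMangoldt N q₀.2.2.2 * (δ⁻¹ ^ 2 * N ^ δ)) :=
        mul_le_mul_of_nonneg_right hcard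
          (mul_nonneg (mul_nonneg (hg _) (hg _)) (by positivity))
    _ = C * ((q₀.1 : ℝ) ^ (2 * δ) * dampedVonMangoldt N q₀.1 *
          ((q₀.2.2.2 : ℝ) ^ (2 * δ) * dampedVonMangoldt N q₀.2.2.2) * (δ⁻¹ ^ 2 * N ^ δ)) := by
        ring
    _ ≤ C * (δ⁻¹ ^ 2 * N ^ (3 / 4 + 4 * δ) * pairWeight δ (φ q₀) * (δ⁻¹ ^ 2 * N ^ δ)) :=
        mul_le_mul_of_nonneg_left (mul_le_mul_of_nonneg_right
          (rpow_mul_dampedVonMangoldt_mul_le_pairWeight hδ hδ4 hN hpp _) (by positivity)) hC0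
    _ = K * pairWeight δ (φ q₀) := by
        rw [hK]; ring

lemma exists_sum_properPowerTerm_le {δ : ℝ} (hδ : 0 < δ) (hδ4 : δ ≤ 1 / 4) :
    ∃ K > 0, ∀ N : ℕ, 1 ≤ N → ∀ F : Finset (ℕ × ℕ × ℕ × ℕ),
      ∑ q ∈ F, properPowerTerm N q ≤ K * (N : ℝ) ^ (3 / 4 + 5 * δ) := by
  obtain ⟨C, hC0, hC⟩ := exists_card_divisors_le_rpow hδ
  have hW := tsum_pairWeight_pos hδ
  refine ⟨(1 + C) * δ⁻¹ ^ 4 * ∑' x, pairWeight δ x, by positivity, fun N hN F => ?_⟩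
  have hN' : (0 : ℝ) < N := by exact_mod_cast hN
  simp_rw [properPowerTerm_eq, ← sum_filter]
  rw [← sum_filter_add_sum_filter_not _ fun q => q.1 = q.2.2.2]
  set S := F.filter IsProperPowerQuadruple
  have hdiag := sum_quadrupleWeight_le_of_diagonal hδ hδ4 hN' (S.filter fun q => q.1 = q.2.2.2)
    fun q hq => ⟨(mem_filter.1 (mem_filter.1 hq).1).2, (mem_filter.1 hq).2⟩
  have hoff := sum_quadrupleWeight_le_of_offDiagonal hδ hδ4 hN' hC0.le hC
    (S.filter fun q => ¬q.1 = q.2.2.2)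
    fun q hq => ⟨(mem_filter.1 (mem_filter.1 hq).1).2, (mem_filter.1 hq).2⟩
  linarith

theorem properPower_quadruple_bound :
    ∀ ε : ℝ, 0 < ε → ∃ C > (0 : ℝ), ∃ N₀ : ℕ, ∀ N : ℕ, N₀ ≤ N →
      Summable (properPowerTerm N) ∧
        ∑' q, properPowerTerm N q ≤ C * (N : ℝ) ^ ((3 : ℝ) / 4 + ε) := by
  intro ε hε
  have hδ : 0 < min ε 1 / 5 := by positivity
  obtain ⟨K, hK, hsum⟩ := exists_sum_properPowerTerm_le hδ (by linarith [min_le_right ε 1])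
  refine ⟨K, hK, 1, fun N hN => ?_⟩
  have hbound (F : Finset (ℕ × ℕ × ℕ × ℕ)) :
      ∑ q ∈ F, properPowerTerm N q ≤ K * (N : ℝ) ^ ((3 : ℝ) / 4 + ε) :=
    (hsum N hN F).trans (mul_le_mul_of_nonneg_left
      (rpow_le_rpow_of_exponent_le (by exact_mod_cast hN) (by linarith [min_le_left ε 1])) hK.le)
  have hsummable := summable_of_sum_le (properPowerTerm_nonneg N) hbound
  exact ⟨hsummable, hsummable.tsum_le_of_sum_le hbound⟩
end

section
/- For every integer n ≥ 2, R(n) = r(n) + O( n^{3/4} (log n)³ ), i.e. the contribution to R(n) of triples in which at least one of the three variables is a proper prime power is ≪ n^{3/4} (log n)³. -/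
/-
Only triples of prime powers contribute to `R n - r n`, each with weight at most `(log n)³`,
and each such triple has a proper prime power in one of its three places. There are `O(√X)`
proper prime powers up to `X`. If `b` or `c` is a proper prime power (`O(n^{1/4})` choices, as
`b, c ≤ √n`), the other square has `O(√n)` choices and `a` is then determined. If `a` is the
proper prime power (`O(√n)` choices), then `b, c` are primes with `b² + c² = n - a`; for `b ≠ c`
the quotient `b / c` is a square root of `-1` modulo `n - a` determining `(b, c)`, and there are
at most `2 ^ ω(n - a) = O(n^{1/4})` of those.
-/

/-- `r n = ∑_{p₁ + p₂² + p₃² = n} log p₁ log p₂ log p₃`, the sum running over ordered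
triples of primes `(p₁, p₂, p₃)` with `p₁ + p₂² + p₃² = n`. -/
noncomputable def r (n : ℕ) : ℝ :=
  ∑ t ∈ ((Finset.range (n + 1)) ×ˢ (Finset.range (n + 1)) ×ˢ (Finset.range (n + 1))).filter
      (fun t => t.1.Prime ∧ t.2.1.Prime ∧ t.2.2.Prime ∧ t.1 + t.2.1 ^ 2 + t.2.2 ^ 2 = n),
    Real.log t.1 * Real.log t.2.1 * Real.log t.2.2

/-- `R n = ∑_{a + b² + c² = n} Λ(a) Λ(b) Λ(c)`, the sum running over ordered triples of
positive integers `(a, b, c)` with `a + b² + c² = n`. -/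
noncomputable def R (n : ℕ) : ℝ :=
  ∑ t ∈ ((Finset.range (n + 1)) ×ˢ (Finset.range (n + 1)) ×ˢ (Finset.range (n + 1))).filter
      (fun t => t.1 + t.2.1 ^ 2 + t.2.2 ^ 2 = n),
    ArithmeticFunction.vonMangoldt t.1 * ArithmeticFunction.vonMangoldt t.2.1 *
      ArithmeticFunction.vonMangoldt t.2.2

open Finset
open scoped ArithmeticFunction.vonMangoldt

section SquareRoots

variable {A B : Type*} [CommRing A] [CommRing B]

lemma IsLocalRing.natCard_sq_eq_le_two [IsLocalRing A] (h2 : IsUnit (2 : A)) {u : A}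
    (hu : IsUnit u) : Nat.card {x : A // x ^ 2 = u} ≤ 2 := by
  rcases isEmpty_or_nonempty {x : A // x ^ 2 = u} with h | ⟨x, hx⟩
  · simp
  have hsub : {y : A | y ^ 2 = u} ⊆ {x, -x} := by
    intro y (hy : y ^ 2 = u)
    have h2x : IsUnit ((x - y) + (x + y)) := by
      rw [show (x - y) + (x + y) = 2 * x by ring]
      exact h2.mul ((isUnit_pow_iff two_ne_zero).1 (hx ▸ hu))
    have hprod : (x - y) * (x + y) = 0 := by linear_combination hx - hy
    rcases isUnit_or_isUnit_of_isUnit_add h2x with h | h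
    · exact Or.inr (show y = -x by linear_combination h.mul_right_eq_zero.1 hprod)
    · exact Or.inl (show y = x by linear_combination -h.mul_left_eq_zero.1 hprod)
  calc Nat.card {y : A // y ^ 2 = u} ≤ Nat.card ({x, -x} : Set A) :=
        Nat.card_mono (Set.toFinite _) hsub
    _ ≤ 2 := by
        rw [Nat.card_coe_set_eq]
        exact (Set.ncard_insert_le _ _).trans (by simp)

lemma natCard_sq_eq_neg_one_congr (e : A ≃+* B) :
    Nat.card {x : A // x ^ 2 = -1} = Nat.card {y : B // y ^ 2 = -1} :=
  Nat.card_congr <| e.toEquiv.subtypeEquiv fun x => by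
    rw [RingEquiv.toEquiv_eq_coe, EquivLike.coe_coe, ← map_pow, ← map_one e, ← map_neg,
      EquivLike.apply_eq_iff_eq]

lemma natCard_sq_eq_neg_one_prod :
    Nat.card {x : A × B // x ^ 2 = -1} =
      Nat.card {x : A // x ^ 2 = -1} * Nat.card {y : B // y ^ 2 = -1} := by
  rw [← Nat.card_prod]
  exact Nat.card_congr <| (Equiv.subtypeEquivRight fun x => by
    simp only [Prod.ext_iff, Prod.pow_fst, Prod.pow_snd, Prod.fst_neg, Prod.snd_neg,
      Prod.fst_one, Prod.snd_one]).trans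
    (Equiv.subtypeProdEquivProd (p := fun a : A => a ^ 2 = -1) (q := fun b : B => b ^ 2 = -1))

end SquareRoots

lemma ZMod.isLocalRing_prime_pow {p k : ℕ} [Fact p.Prime] (hk : k ≠ 0) :
    IsLocalRing (ZMod (p ^ k)) :=
  have : Nontrivial (ZMod (p ^ k)) :=
    ZMod.nontrivial_iff.2 (Nat.one_lt_pow hk (Fact.out : p.Prime).one_lt).ne'
  IsLocalRing.of_surjective' (PadicInt.toZModPow k) (ZMod.ringHom_surjective _)

namespace ZMod

lemma natCard_sq_eq_neg_one_two_pow_le_two {k : ℕ} (hk : k ≠ 0) :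
    Nat.card {x : ZMod (2 ^ k) // x ^ 2 = -1} ≤ 2 := by
  obtain rfl | hk2 : k = 1 ∨ 2 ≤ k := by omega
  · exact Finite.card_subtype_le _ |>.trans_eq (Nat.card_zmod _)
  · have hno (y : ZMod 4) : y ^ 2 ≠ -1 := by revert y; decide
    let f := castHom (pow_dvd_pow 2 hk2) (ZMod 4)
    have : IsEmpty {x : ZMod (2 ^ k) // x ^ 2 = -1} :=
      ⟨fun ⟨x, hx⟩ => hno (f x) (by rw [← map_pow, hx, map_neg, map_one])⟩
    simp

lemma natCard_sq_eq_neg_one_prime_pow_le_two {p k : ℕ} (hp : p.Prime) (hk : k ≠ 0) :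
    Nat.card {x : ZMod (p ^ k) // x ^ 2 = -1} ≤ 2 := by
  obtain rfl | hp2 := eq_or_ne p 2
  · exact natCard_sq_eq_neg_one_two_pow_le_two hk
  have := Fact.mk hp
  have := isLocalRing_prime_pow (p := p) hk
  refine IsLocalRing.natCard_sq_eq_le_two ?_ isUnit_one.neg
  rw [← Nat.cast_ofNat, isUnit_prime_iff_not_dvd Nat.prime_two]
  exact fun h => hp2
    ((Nat.prime_dvd_prime_iff_eq Nat.prime_two hp).1 (Nat.prime_two.dvd_of_dvd_pow h)).symm

lemma natCard_sq_eq_neg_one_le (m : ℕ) :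
    Nat.card {x : ZMod m // x ^ 2 = -1} ≤ 2 ^ #m.primeFactors := by
  induction m using Nat.recOnPosPrimePosCoprime with
  | prime_pow p k hp hk =>
    rw [Nat.primeFactors_prime_pow hk.ne' hp, card_singleton, pow_one]
    exact natCard_sq_eq_neg_one_prime_pow_le_two hp hk.ne'
  | zero =>
    have : IsEmpty {x : ZMod 0 // x ^ 2 = -1} :=
      ⟨fun ⟨(x : ℤ), (hx : x ^ 2 = -1)⟩ => by nlinarith [sq_nonneg x]⟩
    simp
  | one => exact (Finite.card_subtype_le _).trans_eq (by simp)
  | coprime a b _ _ hab iha ihb =>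
    rw [natCard_sq_eq_neg_one_congr (chineseRemainder hab), natCard_sq_eq_neg_one_prod,
      hab.primeFactors_mul, card_union_of_disjoint hab.disjoint_primeFactors, pow_add]
    exact Nat.mul_le_mul iha ihb

end ZMod

lemma Nat.Coprime.sq_add_sq_right {b c : ℕ} (h : b.Coprime c) : c.Coprime (b ^ 2 + c ^ 2) := by
  rw [sq c, Nat.coprime_add_mul_right_right]
  exact h.symm.pow_right 2

lemma mul_lt_of_sq_add_sq_eq {b c b' c' m : ℕ} (hc : 0 < c) (hc' : 0 < c')
    (h : b ^ 2 + c ^ 2 = m) (h' : b' ^ 2 + c' ^ 2 = m) : b * c' < m := by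
  nlinarith

/-- `b / c` determines `(b, c)`: from `b c' ≡ b' c (mod m)` with both sides less than `m` we get
`b c' = b' c`, and coprimality gives `c = c'`. -/
lemma card_le_natCard_sq_eq_neg_one {m : ℕ} (s : Finset (ℕ × ℕ))
    (hs : ∀ t ∈ s, 0 < t.2 ∧ t.1.Coprime t.2 ∧ t.1 ^ 2 + t.2 ^ 2 = m) :
    #s ≤ Nat.card {x : ZMod m // x ^ 2 = -1} := by
  rcases eq_or_ne m 0 with rfl | hm
  · have : s = ∅ := eq_empty_of_forall_notMem fun t ht => by
      obtain ⟨hc, -, hsum⟩ := hs t ht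
      nlinarith
    simp [this]
  have : NeZero m := ⟨hm⟩
  have hinv : ∀ t ∈ s, (t.2 : ZMod m) * (t.2 : ZMod m)⁻¹ = 1 := fun t ht => by
    obtain ⟨-, hcop, hsum⟩ := hs t ht
    exact ZMod.coe_mul_inv_eq_one _ (hsum ▸ hcop.sq_add_sq_right)
  have hzero : ∀ t ∈ s, (t.1 : ZMod m) ^ 2 + (t.2 : ZMod m) ^ 2 = 0 := fun t ht => by
    have := congrArg (Nat.cast : ℕ → ZMod m) (hs t ht).2.2
    push_cast at this
    rwa [ZMod.natCast_self] at this
  let f : s → {x : ZMod m // x ^ 2 = -1} := fun t =>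
    ⟨t.1.1 * (t.1.2 : ZMod m)⁻¹, by
      linear_combination ((t.1.2 : ZMod m)⁻¹) ^ 2 * hzero t.1 t.2 -
        ((t.1.2 : ZMod m) * (t.1.2 : ZMod m)⁻¹ + 1) * hinv t.1 t.2⟩
  have hf : Function.Injective f := by
    rintro ⟨⟨b, c⟩, ht⟩ ⟨⟨b', c'⟩, ht'⟩ hff
    obtain ⟨hc, hcop, hsum⟩ := hs _ ht
    obtain ⟨hc', hcop', hsum'⟩ := hs _ ht'
    have hmod : ((b * c' : ℕ) : ZMod m) = ((b' * c : ℕ) : ZMod m) := by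
      push_cast
      linear_combination ((c : ZMod m) * c') * congrArg Subtype.val hff -
        (b * c' : ZMod m) * hinv _ ht + (b' * c : ZMod m) * hinv _ ht'
    rw [ZMod.natCast_eq_natCast_iff', Nat.mod_eq_of_lt (mul_lt_of_sq_add_sq_eq hc hc' hsum hsum'),
      Nat.mod_eq_of_lt (mul_lt_of_sq_add_sq_eq hc' hc hsum' hsum)] at hmod
    have hcc : c = c' := Nat.dvd_antisymm (hcop.symm.dvd_of_dvd_mul_left ⟨b', by rw [hmod]; ring⟩)
      (hcop'.symm.dvd_of_dvd_mul_left ⟨b, by rw [← hmod]; ring⟩)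
    subst hcc
    obtain rfl : b = b' := Nat.eq_of_mul_eq_mul_right hc hmod
    rfl
  rw [← Nat.card_eq_finsetCard]
  exact Nat.card_le_card_of_injective f hf

lemma card_prime_sq_add_sq_le {m : ℕ} (s : Finset (ℕ × ℕ))
    (hs : ∀ t ∈ s, t.1.Prime ∧ t.2.Prime ∧ t.1 ^ 2 + t.2 ^ 2 = m) :
    #s ≤ 1 + 2 ^ #m.primeFactors := by
  rw [← card_filter_add_card_filter_not (fun t => t.1 = t.2)]
  gcongr
  · refine card_le_one.2 fun t ht t' ht' => ?_
    obtain ⟨hts, hdiag⟩ := mem_filter.1 ht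
    obtain ⟨hts', hdiag'⟩ := mem_filter.1 ht'
    obtain ⟨-, -, hsum⟩ := hs t hts
    obtain ⟨-, -, hsum'⟩ := hs t' hts'
    rw [hdiag] at hsum
    rw [hdiag'] at hsum'
    have : t.2 = t'.2 := Nat.pow_left_injective two_ne_zero (show t.2 ^ 2 = t'.2 ^ 2 by omega)
    exact Prod.ext (by rw [hdiag, hdiag', this]) this
  · refine (card_le_natCard_sq_eq_neg_one _ fun t ht => ?_).trans (ZMod.natCard_sq_eq_neg_one_le m)
    obtain ⟨hts, hne⟩ := mem_filter.1 ht
    obtain ⟨hp, hq, hsum⟩ := hs t hts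
    exact ⟨hq.pos, (Nat.coprime_primes hp hq).2 hne, hsum⟩

lemma sixteen_pow_card_primeFactors_le {m : ℕ} (hm : m ≠ 0) :
    16 ^ #m.primeFactors ≤ 16 ^ 16 * m := by
  have hsplit := card_filter_add_card_filter_not (s := m.primeFactors) (· < 16)
  have hsmall : #{p ∈ m.primeFactors | p < 16} ≤ 16 :=
    (card_le_card fun p hp => mem_range.2 (mem_filter.1 hp).2).trans_eq (card_range 16)
  have hlarge : 16 ^ #{p ∈ m.primeFactors | ¬p < 16} ≤ m :=
    calc 16 ^ #{p ∈ m.primeFactors | ¬p < 16}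
        = ∏ _p ∈ {p ∈ m.primeFactors | ¬p < 16}, 16 := (prod_const _).symm
      _ ≤ ∏ p ∈ {p ∈ m.primeFactors | ¬p < 16}, p :=
          prod_le_prod' fun p hp => not_lt.1 (mem_filter.1 hp).2
      _ ≤ ∏ p ∈ m.primeFactors, p :=
          prod_le_prod_of_subset_of_one_le' (filter_subset _ _)
            fun p hp _ => (Nat.prime_of_mem_primeFactors hp).one_lt.le
      _ ≤ m := Nat.le_of_dvd (Nat.pos_of_ne_zero hm) (Nat.prod_primeFactors_dvd m)
  rw [← hsplit, pow_add]
  exact Nat.mul_le_mul (Nat.pow_le_pow_right (by norm_num) hsmall) hlarge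

def IsProperPrimePow (q : ℕ) : Prop := IsPrimePow q ∧ ¬q.Prime

instance : DecidablePred IsProperPrimePow := fun q =>
  inferInstanceAs (Decidable (IsPrimePow q ∧ ¬q.Prime))

/-- `p ^ k` with `k ≥ 2` is `s ^ 2 * p ^ (k % 2)` with `s = p ^ (k / 2) ≤ √(p ^ k)`, and `p` is
recovered from `s` as its least prime factor. -/
lemma card_properPrimePow_le (X : ℕ) :
    #{q ∈ range (X + 1) | IsProperPrimePow q} ≤ 2 * Nat.sqrt X := by
  have hsub : {q ∈ range (X + 1) | IsProperPrimePow q} ⊆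
      (range 2 ×ˢ Icc 1 (Nat.sqrt X)).image fun e => e.2 ^ 2 * e.2.minFac ^ e.1 := by
    intro q hq
    obtain ⟨hqX, ⟨p, k, hp, hk, rfl⟩, hnp⟩ := mem_filter.1 hq
    rw [← Nat.prime_iff] at hp
    have hk2 : 2 ≤ k := by
      by_contra! h
      obtain rfl : k = 1 := by omega
      exact hnp (by simpa using hp)
    have hdecomp : p ^ k = (p ^ (k / 2)) ^ 2 * p ^ (k % 2) := by
      rw [← pow_mul, ← pow_add]; congr 1; omega
    refine mem_image.2 ⟨(k % 2, p ^ (k / 2)), mem_product.2 ⟨mem_range.2 (Nat.mod_lt _ two_pos),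
      mem_Icc.2 ⟨Nat.one_le_pow _ _ hp.pos, Nat.le_sqrt'.2 ?_⟩⟩, ?_⟩
    · have := mem_range.1 hqX
      calc (p ^ (k / 2)) ^ 2 ≤ p ^ k := by
            rw [hdecomp]; exact Nat.le_mul_of_pos_right _ (pow_pos hp.pos _)
        _ ≤ X := by omega
    · simp only
      rw [hp.pow_minFac (by omega), ← hdecomp]
  calc #{q ∈ range (X + 1) | IsProperPrimePow q}
      ≤ #(range 2 ×ˢ Icc 1 (Nat.sqrt X)) := (card_le_card hsub).trans card_image_le
    _ = 2 * Nat.sqrt X := by simp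

section FourthRoot

variable {n : ℕ} {q : ℝ}

lemma natCast_sqrt_le_sq (hn : (n : ℝ) ≤ q ^ 4) : (Nat.sqrt n : ℝ) ≤ q ^ 2 :=
  le_of_pow_le_pow_left₀ two_ne_zero (by positivity) <| calc
    (Nat.sqrt n : ℝ) ^ 2 ≤ n := by exact_mod_cast Nat.sqrt_le' n
    _ ≤ (q ^ 2) ^ 2 := by rw [← pow_mul]; exact hn

lemma natCast_sqrt_sqrt_le (hq : 0 ≤ q) (hn : (n : ℝ) ≤ q ^ 4) :
    (Nat.sqrt (Nat.sqrt n) : ℝ) ≤ q :=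
  le_of_pow_le_pow_left₀ four_ne_zero hq <| calc
    (Nat.sqrt (Nat.sqrt n) : ℝ) ^ 4 = ((Nat.sqrt (Nat.sqrt n) ^ 2) ^ 2 : ℕ) := by push_cast; ring
    _ ≤ n := by exact_mod_cast (Nat.pow_le_pow_left (Nat.sqrt_le' _) 2).trans (Nat.sqrt_le' n)
    _ ≤ q ^ 4 := hn

lemma two_pow_card_primeFactors_le (hq : 1 ≤ q) (hn : (n : ℝ) ≤ q ^ 4) :
    (2 : ℝ) ^ #n.primeFactors ≤ 2 ^ 16 * q := by
  rcases eq_or_ne n 0 with rfl | hn0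
  · rw [Nat.primeFactors_zero, card_empty, pow_zero]; linarith
  refine le_of_pow_le_pow_left₀ four_ne_zero (by positivity) ?_
  calc ((2 : ℝ) ^ #n.primeFactors) ^ 4 = ((16 ^ #n.primeFactors : ℕ) : ℝ) := by
        push_cast; rw [← pow_mul, mul_comm, pow_mul]; norm_num
    _ ≤ ((16 ^ 16 * n : ℕ) : ℝ) := by exact_mod_cast sixteen_pow_card_primeFactors_le hn0
    _ ≤ (2 ^ 16 * q) ^ 4 := by push_cast; rw [mul_pow]; norm_num; linarith

end FourthRoot

def reprTriples (n : ℕ) : Finset (ℕ × ℕ × ℕ) :=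
  {t ∈ range (n + 1) ×ˢ range (n + 1) ×ˢ range (n + 1) | t.1 + t.2.1 ^ 2 + t.2.2 ^ 2 = n}

lemma mem_reprTriples {n : ℕ} {t : ℕ × ℕ × ℕ} :
    t ∈ reprTriples n ↔ t.1 + t.2.1 ^ 2 + t.2.2 ^ 2 = n := by
  have hb := Nat.le_self_pow two_ne_zero t.2.1
  have hc := Nat.le_self_pow two_ne_zero t.2.2
  simp only [reprTriples, mem_filter, mem_product, mem_range, and_iff_right_iff_imp]
  omega


lemma R_eq_sum (n : ℕ) : R n = ∑ t ∈ reprTriples n, Λ t.1 * Λ t.2.1 * Λ t.2.2 := rfl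

lemma r_eq_sum (n : ℕ) :
    r n = ∑ t ∈ reprTriples n with t.1.Prime ∧ t.2.1.Prime ∧ t.2.2.Prime,
      Λ t.1 * Λ t.2.1 * Λ t.2.2 := by
  rw [r, reprTriples, filter_filter]
  refine sum_congr (filter_congr fun t _ => by tauto) fun t ht => ?_
  obtain ⟨-, -, h1, h2, h3⟩ := mem_filter.1 ht
  simp only [ArithmeticFunction.vonMangoldt_apply_prime, h1, h2, h3]

lemma R_sub_r_eq (n : ℕ) :
    R n - r n = ∑ t ∈ reprTriples n with ¬(t.1.Prime ∧ t.2.1.Prime ∧ t.2.2.Prime),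
      Λ t.1 * Λ t.2.1 * Λ t.2.2 := by
  rw [R_eq_sum, r_eq_sum, ← sum_filter_add_sum_filter_not (reprTriples n)
    (fun t => t.1.Prime ∧ t.2.1.Prime ∧ t.2.2.Prime), add_sub_cancel_left]

lemma r_le_R (n : ℕ) : r n ≤ R n :=
  sub_nonneg.1 <| R_sub_r_eq n ▸ sum_nonneg fun _ _ => by positivity

lemma vonMangoldt_le_log_of_le {a n : ℕ} (h : a ≤ n) : Λ a ≤ Real.log n := by
  rcases Nat.eq_zero_or_pos a with rfl | ha
  · simpa using Real.log_natCast_nonneg n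
  · exact ArithmeticFunction.vonMangoldt_le_log.trans
      (Real.log_le_log (by exact_mod_cast ha) (by exact_mod_cast h))

lemma R_sub_r_le (n : ℕ) :
    R n - r n ≤ (#{t ∈ reprTriples n | IsProperPrimePow t.1 ∧ t.2.1.Prime ∧ t.2.2.Prime} +
      #{t ∈ reprTriples n | IsProperPrimePow t.2.1} +
      #{t ∈ reprTriples n | IsProperPrimePow t.2.2}) * Real.log n ^ 3 := by
  set S := {t ∈ reprTriples n | ¬(t.1.Prime ∧ t.2.1.Prime ∧ t.2.2.Prime)}
  set B := {t ∈ reprTriples n | IsProperPrimePow t.1 ∧ t.2.1.Prime ∧ t.2.2.Prime} ∪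
    {t ∈ reprTriples n | IsProperPrimePow t.2.1} ∪ {t ∈ reprTriples n | IsProperPrimePow t.2.2}
  have hsub : {t ∈ S | Λ t.1 * Λ t.2.1 * Λ t.2.2 ≠ 0} ⊆ B := by
    intro t ht
    simp only [S, mem_filter, mul_ne_zero_iff, ArithmeticFunction.vonMangoldt_ne_zero_iff] at ht
    simp only [B, mem_union, mem_filter]
    unfold IsProperPrimePow
    tauto
  have hterm : ∀ t ∈ B, Λ t.1 * Λ t.2.1 * Λ t.2.2 ≤ Real.log n ^ 3 := by
    intro t ht
    have hsum : t.1 + t.2.1 ^ 2 + t.2.2 ^ 2 = n := by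
      simp only [B, mem_union, mem_filter, mem_reprTriples] at ht; tauto
    have hb := Nat.le_self_pow two_ne_zero t.2.1
    have hc := Nat.le_self_pow two_ne_zero t.2.2
    calc Λ t.1 * Λ t.2.1 * Λ t.2.2 ≤ Real.log n * Real.log n * Real.log n := by
          gcongr <;> exact vonMangoldt_le_log_of_le (by omega)
      _ = Real.log n ^ 3 := by ring
  calc R n - r n = ∑ t ∈ {t ∈ S | Λ t.1 * Λ t.2.1 * Λ t.2.2 ≠ 0}, Λ t.1 * Λ t.2.1 * Λ t.2.2 := by
        rw [R_sub_r_eq, sum_filter_ne_zero]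
    _ ≤ ∑ t ∈ B, Λ t.1 * Λ t.2.1 * Λ t.2.2 :=
        sum_le_sum_of_subset_of_nonneg hsub fun _ _ _ => by positivity
    _ ≤ #B * Real.log n ^ 3 := by
        simpa using sum_le_card_nsmul B _ _ hterm
    _ ≤ _ := by
        gcongr
        exact_mod_cast (card_union_le _ _).trans (Nat.add_le_add_right (card_union_le _ _) _)

section Counting

variable {n : ℕ} {q : ℝ}

lemma card_reprTriples_filter_snd_fst_le (P : ℕ → Prop) [DecidablePred P] :
    #{t ∈ reprTriples n | P t.2.1} ≤ #{b ∈ range (Nat.sqrt n + 1) | P b} * (Nat.sqrt n + 1) := by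
  refine (card_le_card_of_injOn (t := {b ∈ range (Nat.sqrt n + 1) | P b} ×ˢ
    range (Nat.sqrt n + 1)) Prod.snd (fun t ht => ?_) fun t ht t' ht' h => ?_).trans_eq
    (by rw [card_product, card_range])
  · obtain ⟨hsum, hP⟩ := mem_filter.1 ht
    rw [mem_reprTriples] at hsum
    rw [mem_coe, mem_product, mem_filter, mem_range, mem_range, Nat.lt_succ_iff, Nat.le_sqrt',
      Nat.lt_succ_iff, Nat.le_sqrt']
    exact ⟨⟨by omega, hP⟩, by omega⟩
  · have hsum := mem_reprTriples.1 (mem_filter.1 ht).1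
    have hsum' := mem_reprTriples.1 (mem_filter.1 ht').1
    refine Prod.ext ?_ h
    rw [Prod.ext_iff] at h
    rw [h.1, h.2] at hsum
    omega

lemma card_reprTriples_filter_snd_snd_eq (P : ℕ → Prop) [DecidablePred P] :
    #{t ∈ reprTriples n | P t.2.2} = #{t ∈ reprTriples n | P t.2.1} := by
  refine card_nbij' (fun t => (t.1, t.2.2, t.2.1)) (fun t => (t.1, t.2.2, t.2.1)) ?_ ?_
    (fun _ _ => rfl) (fun _ _ => rfl) <;>
  · intro t ht
    simp only [coe_filter, Set.mem_ofPred_eq, mem_reprTriples] at ht ⊢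
    exact ⟨by omega, ht.2⟩

lemma card_reprTriples_properPrimePow_snd_fst_le (hq : 1 ≤ q) (hn : (n : ℝ) ≤ q ^ 4) :
    (#{t ∈ reprTriples n | IsProperPrimePow t.2.1} : ℝ) ≤ 4 * q ^ 3 := by
  have hsqrt := natCast_sqrt_le_sq hn
  have hsqrt2 := natCast_sqrt_sqrt_le (by linarith) hn
  calc (#{t ∈ reprTriples n | IsProperPrimePow t.2.1} : ℝ)
      ≤ ((2 * Nat.sqrt (Nat.sqrt n) * (Nat.sqrt n + 1) : ℕ) : ℝ) := by
        exact_mod_cast (card_reprTriples_filter_snd_fst_le _).trans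
          (Nat.mul_le_mul_right _ (card_properPrimePow_le _))
    _ ≤ 2 * q * (q ^ 2 + 1) := by push_cast; gcongr
    _ ≤ 4 * q ^ 3 := by nlinarith

lemma card_reprTriples_properPrimePow_fst_le (hq : 1 ≤ q) (hn : (n : ℝ) ≤ q ^ 4) :
    (#{t ∈ reprTriples n | IsProperPrimePow t.1 ∧ t.2.1.Prime ∧ t.2.2.Prime} : ℝ) ≤
      2 * (2 ^ 16 + 1) * q ^ 3 := by
  set B := {t ∈ reprTriples n | IsProperPrimePow t.1 ∧ t.2.1.Prime ∧ t.2.2.Prime}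
  set A := {a ∈ range (n + 1) | IsProperPrimePow a}
  have hfiber : ∀ a ∈ A, (#{t ∈ B | t.1 = a} : ℝ) ≤ (2 ^ 16 + 1) * q := by
    intro a _
    have hpairs : #{t ∈ B | t.1 = a} ≤ 1 + 2 ^ #(n - a).primeFactors := by
      rw [← card_image_of_injOn fun t ht t' ht' h => Prod.ext (by
        rw [(mem_filter.1 ht).2, (mem_filter.1 ht').2]) h]
      refine card_prime_sq_add_sq_le _ fun s hs => ?_
      obtain ⟨t, ht, rfl⟩ := mem_image.1 hs
      simp only [B, mem_filter, mem_reprTriples] at ht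
      exact ⟨ht.1.2.2.1, ht.1.2.2.2, by omega⟩
    have hω := two_pow_card_primeFactors_le hq (n := n - a)
      ((Nat.cast_le.2 (Nat.sub_le n a)).trans hn)
    calc (#{t ∈ B | t.1 = a} : ℝ) ≤ 1 + 2 ^ #(n - a).primeFactors := by exact_mod_cast hpairs
      _ ≤ (2 ^ 16 + 1) * q := by linarith
  have hA : (#A : ℝ) ≤ 2 * q ^ 2 := by
    have := natCast_sqrt_le_sq hn
    calc (#A : ℝ) ≤ ((2 * Nat.sqrt n : ℕ) : ℝ) := by exact_mod_cast card_properPrimePow_le n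
      _ ≤ 2 * q ^ 2 := by push_cast; linarith
  rw [card_eq_sum_card_fiberwise (f := Prod.fst) (t := A) fun t ht => by
    obtain ⟨hsum, hP⟩ := mem_filter.1 ht
    exact mem_filter.2 ⟨mem_range.2 (by rw [mem_reprTriples] at hsum; omega), hP.1⟩]
  push_cast
  calc ∑ a ∈ A, (#{t ∈ B | t.1 = a} : ℝ) ≤ #A * ((2 ^ 16 + 1) * q) := by
        simpa using sum_le_card_nsmul A _ _ hfiber
    _ ≤ 2 * q ^ 2 * ((2 ^ 16 + 1) * q) := by gcongr
    _ = 2 * (2 ^ 16 + 1) * q ^ 3 := by ring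

end Counting

theorem R_sub_r_bound :
    ∃ C > (0 : ℝ), ∀ n : ℕ, 2 ≤ n →
      |R n - r n| ≤ C * (n : ℝ) ^ ((3 : ℝ) / 4) * (Real.log n) ^ 3 := by
  refine ⟨2 ^ 18, by norm_num, fun n hn => ?_⟩
  have hq4 : (n : ℝ) ≤ ((n : ℝ) ^ ((1 : ℝ) / 4)) ^ 4 := by
    have := Real.rpow_inv_natCast_pow (Nat.cast_nonneg (α := ℝ) n) (four_ne_zero (α := ℕ))
    rw [Nat.cast_ofNat, ← one_div] at this
    exact this.ge
  have hq3 : ((n : ℝ) ^ ((1 : ℝ) / 4)) ^ 3 = (n : ℝ) ^ ((3 : ℝ) / 4) := by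
    rw [← Real.rpow_natCast, ← Real.rpow_mul (Nat.cast_nonneg n)]; norm_num
  set q := (n : ℝ) ^ ((1 : ℝ) / 4)
  have hq : 1 ≤ q := Real.one_le_rpow (by exact_mod_cast (by omega : 1 ≤ n)) (by norm_num)
  have hB1 := card_reprTriples_properPrimePow_fst_le hq hq4
  have hB2 := card_reprTriples_properPrimePow_snd_fst_le hq hq4
  have hB3 := card_reprTriples_filter_snd_snd_eq (n := n) IsProperPrimePow ▸ hB2
  rw [abs_of_nonneg (sub_nonneg.2 (r_le_R n)), ← hq3]
  calc R n - r n ≤ _ := R_sub_r_le n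
    _ ≤ (2 * (2 ^ 16 + 1) * q ^ 3 + 4 * q ^ 3 + 4 * q ^ 3) * Real.log n ^ 3 := by gcongr
    _ = (2 * (2 ^ 16 + 1) + 8) * q ^ 3 * Real.log n ^ 3 := by ring
    _ ≤ 2 ^ 18 * q ^ 3 * Real.log n ^ 3 := by gcongr; norm_num
end
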